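/- arXiv:0804.3878 — 2 statements merged into one kernel-verified Lean document; each statement's English description precedes it below -/
import Mathlib

section
/- Let H be a complex Hilbert space and T a bounded self-adjoint operator on H. Assume the set S = {λ : ℝ | λ > 0 and λ ∈ spectrum ℂ T} is nonempty. Then the infimum, over all φ ∈ H with Re⟪Tφ, φ⟫ > 0, of ‖Tφ‖² / Re⟪Tφ, φ⟫ is equal to the infimum of S. (This is the Hilbert-space content of Lemma 3.4 of the paper, which identifies λ₁⁺(M,g,σ) with the infimum of the positive part of the Dirac spectrum on a complete manifold, where the Dirac operator is essentially self-adjoint.) -/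
/-!
For `c ≥ 0` and self-adjoint `T` we have `re ⟪(T² - c T) φ, φ⟫ = ‖T φ‖² - c re ⟪T φ, φ⟫`, so `c`
is a lower bound of the quotients `‖T φ‖² / re ⟪T φ, φ⟫` iff `T² - c T ≥ 0`. By the continuous
functional calculus this holds iff `x² - c x ≥ 0` on the spectrum, i.e. iff no spectral value lies
in `(0, c)`, i.e. iff `c` is a lower bound of the positive spectrum. The two sets therefore have
the same lower bounds, hence the same infimum.
-/

open scoped InnerProductSpace

theorem csInf_eq_csInf_of_lowerBounds_eq {α : Type*} [ConditionallyCompleteLinearOrder α]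
    [NoMaxOrder α] {s t : Set α} (hst : lowerBounds s = lowerBounds t) (ht : t.Nonempty)
    (ht_bdd : BddBelow t) : sInf s = sInf t := by
  have hs : s.Nonempty := by
    rw [Set.nonempty_iff_ne_empty]
    rintro rfl
    obtain ⟨x, hx⟩ := ht
    obtain ⟨y, hxy⟩ := exists_gt x
    have hy : y ∈ lowerBounds t := by simp [← hst]
    exact (hy hx).not_gt hxy
  have hs_bdd : BddBelow s := by rwa [BddBelow, hst]
  rw [← csSup_lowerBounds_eq_csInf hs_bdd hs, hst, csSup_lowerBounds_eq_csInf ht_bdd ht]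

lemma mem_lowerBounds_ratios_iff {ι : Type*} {f g : ι → ℝ} {c : ℝ} (hc : 0 ≤ c)
    (hf : ∀ i, 0 ≤ f i) :
    c ∈ lowerBounds {r | ∃ i, 0 < g i ∧ r = f i / g i} ↔ ∀ i, c * g i ≤ f i := by
  refine ⟨fun h i => ?_, ?_⟩
  · rcases le_or_gt (g i) 0 with hg | hg
    · nlinarith [hf i]
    · exact (le_div_iff₀ hg).mp (h ⟨i, hg, rfl⟩)
  · rintro h _ ⟨i, hg, rfl⟩
    exact (le_div_iff₀ hg).mpr (h i)

lemma sq_sub_mul_nonneg_iff {c x : ℝ} (hc : 0 ≤ c) : 0 ≤ x ^ 2 - c * x ↔ (0 < x → c ≤ x) := by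
  refine ⟨fun h hx => by nlinarith, fun h => ?_⟩
  rcases le_or_gt x 0 with hx | hx
  · nlinarith
  · nlinarith [h hx]

lemma IsSelfAdjoint.sq_sub_smul_nonneg_iff {A : Type*} [CStarAlgebra A] [PartialOrder A]
    [StarOrderedRing A] {a : A} (ha : IsSelfAdjoint a) {c : ℝ} (hc : 0 ≤ c) :
    0 ≤ a ^ 2 - c • a ↔ ∀ x ∈ spectrum ℝ a, 0 < x → c ≤ x := by
  rw [← cfc_pow_id (R := ℝ) a 2, ← cfc_smul_id (R := ℝ) c a, ← cfc_sub .., cfc_nonneg_iff ..]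
  exact forall₂_congr fun x _ => sq_sub_mul_nonneg_iff hc

section Hilbert

variable {H : Type*} [NormedAddCommGroup H] [InnerProductSpace ℂ H] [CompleteSpace H]

lemma IsSelfAdjoint.re_inner_sq_sub_smul_apply {T : H →L[ℂ] H} (hT : IsSelfAdjoint T) (c : ℝ)
    (φ : H) : (⟪(T ^ 2 - c • T) φ, φ⟫_ℂ).re = ‖T φ‖ ^ 2 - c * (⟪T φ, φ⟫_ℂ).re := by
  have hTT : ⟪T (T φ), φ⟫_ℂ = ⟪T φ, T φ⟫_ℂ := hT.isSymmetric (T φ) φ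
  simp [pow_two, hTT]

lemma IsSelfAdjoint.mul_re_inner_le_norm_sq_iff {T : H →L[ℂ] H} (hT : IsSelfAdjoint T) {c : ℝ}
    (hc : 0 ≤ c) :
    (∀ φ, c * (⟪T φ, φ⟫_ℂ).re ≤ ‖T φ‖ ^ 2) ↔ ∀ x ∈ spectrum ℝ T, 0 < x → c ≤ x := by
  have hsa : IsSelfAdjoint (T ^ 2 - c • T) := (hT.pow 2).sub (.smul (R := ℝ) (.all c) hT)
  rw [← hT.sq_sub_smul_nonneg_iff hc, ContinuousLinearMap.nonneg_iff_isPositive,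
    ContinuousLinearMap.isPositive_def', and_iff_right hsa]
  refine forall_congr' fun φ => ?_
  rw [ContinuousLinearMap.reApplyInnerSelf, RCLike.re_to_complex, hT.re_inner_sq_sub_smul_apply,
    sub_nonneg]

end Hilbert

/-- Hilbert-space content of Lemma 3.4: the infimum of the Rayleigh-type quotients
`‖Tφ‖² / Re⟪Tφ, φ⟫` over all `φ` with `Re⟪Tφ, φ⟫ > 0` equals the infimum of the
positive part of the spectrum of the bounded self-adjoint operator `T`. -/
theorem stmt_0 {H : Type*} [NormedAddCommGroup H] [InnerProductSpace ℂ H] [CompleteSpace H]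
    (T : H →L[ℂ] H) (hT : IsSelfAdjoint T)
    (hS : {l : ℝ | 0 < l ∧ (l : ℂ) ∈ spectrum ℂ T}.Nonempty) :
    sInf {r : ℝ | ∃ φ : H, 0 < (⟪T φ, φ⟫_ℂ).re ∧ r = ‖T φ‖ ^ 2 / (⟪T φ, φ⟫_ℂ).re} =
      sInf {l : ℝ | 0 < l ∧ (l : ℂ) ∈ spectrum ℂ T} := by
  refine csInf_eq_csInf_of_lowerBounds_eq ?_ hS ⟨0, fun l hl => hl.1.le⟩
  ext c
  rcases le_or_gt c 0 with hc | hc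
  · refine iff_of_true ?_ fun l hl => hc.trans hl.1.le
    rintro _ ⟨φ, hφ, rfl⟩
    exact hc.trans (by positivity)
  · have hspec (x : ℝ) : (x : ℂ) ∈ spectrum ℂ T ↔ x ∈ spectrum ℝ T :=
      spectrum.algebraMap_mem_iff (R := ℝ) ℂ
    calc c ∈ lowerBounds _ ↔ ∀ φ, c * (⟪T φ, φ⟫_ℂ).re ≤ ‖T φ‖ ^ 2 :=
          mem_lowerBounds_ratios_iff hc.le fun φ => sq_nonneg _
      _ ↔ ∀ x ∈ spectrum ℝ T, 0 < x → c ≤ x := hT.mul_re_inner_le_norm_sq_iff hc.le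
      _ ↔ c ∈ lowerBounds _ := by
          simp only [mem_lowerBounds, Set.mem_ofPred_eq, hspec, and_imp]
          exact forall_congr' fun x => imp.swap
end

section
/- Let H be a complex Hilbert space and T a bounded self-adjoint operator on H. If λ > 0 is a real number with λ ∈ spectrum ℂ T, then for every ε > 0 there exists φ ∈ H with Re⟪Tφ, φ⟫ > 0 and ‖Tφ‖² < (λ + ε) · Re⟪Tφ, φ⟫. (This is the Hilbert-space content of Lemma 3.3(ii): if λ > 0 is an eigenvalue of the Dirac operator or an element of its essential spectrum, then λ₁⁺ ≤ λ; the proof uses an approximating sequence φᵢ with ‖Tφᵢ − λφᵢ‖ → 0 and ‖φᵢ‖ → 1, for which ‖Tφᵢ‖²/Re⟪Tφᵢ, φᵢ⟫ → λ.) -/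
/-!
A normal operator `S` on a Hilbert space with `‖S x‖ ≥ c ‖x‖` is invertible, since
`⟪S* S x, x⟫ ≥ c² ‖x‖²` makes `S* S` invertible and `S* S = S S*`. Hence every point `λ` of the
spectrum of a self-adjoint `T` is an approximate eigenvalue: there is `φ ≠ 0` with
`‖Tφ - λφ‖ < δ ‖φ‖`. For such `φ`, `‖Tφ‖ < (λ + δ) ‖φ‖` and `Re⟪Tφ, φ⟫ > (λ - δ) ‖φ‖²`, and
`(λ + δ)² < (λ + ε)(λ - δ)` once `δ` is small.
-/

open scoped InnerProductSpace NNReal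

theorem norm_lt_of_norm_sub_smul_lt {𝕜 E : Type*} [NormedField 𝕜] [NormedAddCommGroup E]
    [NormedSpace 𝕜 E] {v x : E} {μ : 𝕜} {δ : ℝ} (h : ‖v - μ • x‖ < δ * ‖x‖) :
    ‖v‖ < (‖μ‖ + δ) * ‖x‖ :=
  calc ‖v‖ ≤ ‖μ • x‖ + ‖v - μ • x‖ := norm_le_norm_add_norm_sub' v (μ • x)
    _ < (‖μ‖ + δ) * ‖x‖ := by rw [norm_smul]; linarith

theorem sub_mul_norm_sq_lt_re_inner_of_norm_sub_smul_lt {𝕜 E : Type*} [RCLike 𝕜]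
    [NormedAddCommGroup E] [InnerProductSpace 𝕜 E] {v x : E} {μ δ : ℝ}
    (h : ‖v - (μ : 𝕜) • x‖ < δ * ‖x‖) : (μ - δ) * ‖x‖ ^ 2 < RCLike.re ⟪v, x⟫_𝕜 := by
  have hx : 0 < ‖x‖ := (norm_nonneg x).lt_of_ne fun hx => by
    rw [← hx, mul_zero] at h
    exact (norm_nonneg _).not_gt h
  have hsplit : RCLike.re ⟪v, x⟫_𝕜 = μ * ‖x‖ ^ 2 + RCLike.re ⟪v - (μ : 𝕜) • x, x⟫_𝕜 := by
    simp [inner_sub_left, inner_smul_left, inner_self_eq_norm_sq_to_K]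
  have hcs := (RCLike.abs_re_le_norm _).trans (norm_inner_le_norm (𝕜 := 𝕜) (v - (μ : 𝕜) • x) x)
  nlinarith [neg_abs_le (RCLike.re ⟪v - (μ : 𝕜) • x, x⟫_𝕜)]

namespace ContinuousLinearMap

variable {𝕜 E : Type*} [RCLike 𝕜] [NormedAddCommGroup E] [InnerProductSpace 𝕜 E] [CompleteSpace E]

theorem isUnit_of_isStarNormal_of_forall_mul_norm_le (S : E →L[𝕜] E) [IsStarNormal S] {c : ℝ≥0}
    (hc : 0 < c) (h : ∀ x, c * ‖x‖ ≤ ‖S x‖) : IsUnit S := by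
  have hSS : IsUnit (star S * S) := by
    refine isUnit_of_forall_le_norm_inner_map _ (pow_pos hc 2) fun x => ?_
    have hx : ⟪(star S * S) x, x⟫_𝕜 = ⟪S x, S x⟫_𝕜 := by
      rw [star_eq_adjoint, mul_def, comp_apply, adjoint_inner_left]
    rw [hx, inner_self_eq_norm_sq_to_K, norm_pow, RCLike.norm_ofReal, abs_norm, NNReal.coe_pow]
    calc ‖x‖ ^ 2 * (c : ℝ) ^ 2 = (c * ‖x‖) ^ 2 := by ring
      _ ≤ ‖S x‖ ^ 2 := by gcongr; exact h x
  exact (IsStarNormal.star_comm_self.isUnit_mul_iff.mp hSS).2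

theorem exists_ne_zero_norm_sub_smul_lt_of_mem_spectrum (T : E →L[𝕜] E) [IsStarNormal T]
    {μ : 𝕜} (hμ : μ ∈ spectrum 𝕜 T) {δ : ℝ≥0} (hδ : 0 < δ) :
    ∃ x ≠ 0, ‖T x - μ • x‖ < δ * ‖x‖ := by
  by_contra! hbdd
  have : IsStarNormal (algebraMap 𝕜 (E →L[𝕜] E) μ) :=
    ⟨by rw [← algebraMap_star_comm]; exact Algebra.commute_algebraMap_left _ _⟩
  have : IsStarNormal (algebraMap 𝕜 (E →L[𝕜] E) μ - T) :=
    (Algebra.commute_algebraMap_left μ _).isStarNormal_sub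
  refine spectrum.mem_iff.mp hμ (isUnit_of_isStarNormal_of_forall_mul_norm_le _ hδ fun x => ?_)
  obtain rfl | hx := eq_or_ne x 0
  · simp
  · simpa [norm_sub_rev, Algebra.algebraMap_eq_smul_one] using hbdd x hx

end ContinuousLinearMap

/-- Hilbert-space content of Lemma 3.3(ii): if `λ > 0` lies in the spectrum of the bounded
self-adjoint operator `T`, then for every `ε > 0` there is a vector `φ` with
`Re⟪Tφ, φ⟫ > 0` and `‖Tφ‖² < (λ + ε) · Re⟪Tφ, φ⟫`. -/
theorem stmt_2 {H : Type*} [NormedAddCommGroup H] [InnerProductSpace ℂ H] [CompleteSpace H]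
    (T : H →L[ℂ] H) (hT : IsSelfAdjoint T)
    (lam : ℝ) (hlam : 0 < lam) (hspec : (lam : ℂ) ∈ spectrum ℂ T) :
    ∀ ε > (0 : ℝ), ∃ φ : H,
      0 < (⟪T φ, φ⟫_ℂ).re ∧ ‖T φ‖ ^ 2 < (lam + ε) * (⟪T φ, φ⟫_ℂ).re := by
  intro ε hε
  obtain ⟨δ, hδε, hδ⟩ : ∃ δ : ℝ≥0, (lam + δ) ^ 2 < (lam + ε) * (lam - δ) ∧ 0 < δ := by
    have hcont : ContinuousAt (fun δ : ℝ≥0 => (lam + δ) ^ 2) 0 := by fun_prop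
    refine (((hcont.eventually_lt (by fun_prop) ?_).filter_mono nhdsWithin_le_nhds).and
      (self_mem_nhdsWithin (s := Set.Ioi 0))).exists
    simp only [NNReal.coe_zero, add_zero, sub_zero]
    nlinarith
  have : IsStarNormal T := hT.isStarNormal
  obtain ⟨φ, hφ, hTφ⟩ := T.exists_ne_zero_norm_sub_smul_lt_of_mem_spectrum hspec hδ
  have hnorm := norm_lt_of_norm_sub_smul_lt hTφ
  have hre := sub_mul_norm_sq_lt_re_inner_of_norm_sub_smul_lt hTφ
  rw [Complex.norm_real, Real.norm_of_nonneg hlam.le] at hnorm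
  have hlamδ : 0 < lam - δ := by nlinarith
  refine ⟨φ, lt_of_le_of_lt (by positivity) hre, ?_⟩
  calc ‖T φ‖ ^ 2 < ((lam + δ) * ‖φ‖) ^ 2 := by gcongr
    _ < (lam + ε) * ((lam - δ) * ‖φ‖ ^ 2) := by
      rw [mul_pow, ← mul_assoc]
      gcongr
    _ < (lam + ε) * (⟪T φ, φ⟫_ℂ).re := by gcongr; exact hre
end
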